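/- Local satisfaction in HI is preserved by translations along signature morphisms that are identities on nominals and modalities: for such a morphism φ = (id, id, φ₀) : (Nom, Λ, Σ) → (Nom, Λ, Σ'), any Kripke model (M', W) over the target, any world w, and any sentence ρ over the source, (M', W) ⊨^w Sen^HI(φ)(ρ) iff (Mod^I(φ₀)∘M', W) ⊨^w ρ, where the reduct Kripke model has the same frame W and world-wise reduced components, provided the quantification space is closed under the relevant pushouts with weak amalgamation. -/

import Mathlib

universe u v w

variable (Sig : Type u) (Mor : Sig → Sig → Type u)
variable (Sen : Sig → Type v) (Mod : Sig → Type w)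

/-- Pushout data for a morphism φ : A → B along a quantification morphism
χ : A → C (in the quantification space `D`): an object `P`, a quantification
morphism `qχ : B → P` (again in `D`) and a morphism `qφ : C → P`. -/
structure POut (D : ∀ A B : Sig, Mor A B → Prop) (A B C : Sig)
    (φ : Mor A B) (χ : Mor A C) : Type u where
  P : Sig
  qχ : Mor B P
  qφ : Mor C P
  hq : D B P qχ

/-- Sentences of HI over signature `A`: base sentences, nominals, Booleans,
modalities, @, and quantifiers over designated morphisms of `D`. -/
inductive HSen (Nom : Type u) (Λ : ℕ → Type u)
    (D : ∀ A B : Sig, Mor A B → Prop) : Sig → Type (max u v) where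
  | base (A : Sig) : Sen A → HSen Nom Λ D A
  | nom (A : Sig) : Nom → HSen Nom Λ D A
  | and (A : Sig) : HSen Nom Λ D A → HSen Nom Λ D A → HSen Nom Λ D A
  | or (A : Sig) : HSen Nom Λ D A → HSen Nom Λ D A → HSen Nom Λ D A
  | imp (A : Sig) : HSen Nom Λ D A → HSen Nom Λ D A → HSen Nom Λ D A
  | not (A : Sig) : HSen Nom Λ D A → HSen Nom Λ D A
  | box (A : Sig) (n : ℕ) : Λ (n + 1) → (Fin n → HSen Nom Λ D A) → HSen Nom Λ D A
  | dia (A : Sig) (n : ℕ) : Λ (n + 1) → (Fin n → HSen Nom Λ D A) → HSen Nom Λ D A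
  | at_ (A : Sig) : Nom → HSen Nom Λ D A → HSen Nom Λ D A
  | all (A B : Sig) (χ : Mor A B) (hχ : D A B χ) : HSen Nom Λ D B → HSen Nom Λ D A
  | ex (A B : Sig) (χ : Mor A B) (hχ : D A B χ) : HSen Nom Λ D B → HSen Nom Λ D A

/-- Kripke models over signature `A` with fixed world set `W`. -/
structure Kripke (W : Type u) (Nom : Type u) (Λ : ℕ → Type u) (A : Sig) where
  rel : ∀ n : ℕ, Λ n → (Fin n → W) → Prop
  nomI : Nom → W
  mod : W → Mod A

/-- Reduct of a Kripke model along a morphism that is the identity on nominals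
and modalities: same frame, world-wise reduct of the base models. -/
def kred {W Nom : Type u} {Λ : ℕ → Type u}
    (modRed : ∀ A B : Sig, Mor A B → Mod B → Mod A) (A B : Sig) (φ : Mor A B)
    (K : Kripke Sig Mod W Nom Λ B) : Kripke Sig Mod W Nom Λ A :=
  { rel := K.rel, nomI := K.nomI, mod := fun w => modRed A B φ (K.mod w) }

/-- Local satisfaction of HI-sentences; quantifiers range over χ-expansions of
the Kripke model (same frame and nominal interpretation). -/
def locSat {W Nom : Type u} {Λ : ℕ → Type u} {D : ∀ A B : Sig, Mor A B → Prop}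
    (sat : ∀ A : Sig, Mod A → Sen A → Prop)
    (modRed : ∀ A B : Sig, Mor A B → Mod B → Mod A) :
    ∀ A : Sig, Kripke Sig Mod W Nom Λ A → W → HSen Sig Mor Sen Nom Λ D A → Prop
  | A, K, w, .base _ ρ => sat A (K.mod w) ρ
  | _, K, w, .nom _ i => K.nomI i = w
  | A, K, w, .and _ ρ σ => locSat sat modRed A K w ρ ∧ locSat sat modRed A K w σ
  | A, K, w, .or _ ρ σ => locSat sat modRed A K w ρ ∨ locSat sat modRed A K w σ
  | A, K, w, .imp _ ρ σ => locSat sat modRed A K w ρ → locSat sat modRed A K w σ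
  | A, K, w, .not _ ρ => ¬ locSat sat modRed A K w ρ
  | A, K, w, .box _ n l args =>
      ∀ t : Fin (n + 1) → W, t 0 = w → K.rel (n + 1) l t →
        ∃ i : Fin n, locSat sat modRed A K (t i.succ) (args i)
  | A, K, w, .dia _ n l args =>
      ∃ t : Fin (n + 1) → W, t 0 = w ∧ K.rel (n + 1) l t ∧
        ∀ i : Fin n, locSat sat modRed A K (t i.succ) (args i)
  | A, K, _, .at_ _ i ρ => locSat sat modRed A K (K.nomI i) ρ
  | A, K, w, .all _ B χ _ ρ =>
      ∀ K₁ : Kripke Sig Mod W Nom Λ B,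
        kred Sig Mor Mod modRed A B χ K₁ = K → locSat sat modRed B K₁ w ρ
  | A, K, w, .ex _ B χ _ ρ =>
      ∃ K₁ : Kripke Sig Mod W Nom Λ B,
        kred Sig Mor Mod modRed A B χ K₁ = K ∧ locSat sat modRed B K₁ w ρ

/-- Sentence translation along a morphism (identity on nominals and
modalities): base sentences are translated by `senTr`, quantified sentences by
the designated pushout of the quantification morphism. -/
def hTr {Nom : Type u} {Λ : ℕ → Type u} {D : ∀ A B : Sig, Mor A B → Prop}
    (senTr : ∀ A B : Sig, Mor A B → Sen A → Sen B)
    (po : ∀ (A B C : Sig) (φ : Mor A B) (χ : Mor A C), D A C χ →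
        POut Sig Mor D A B C φ χ) :
    ∀ (A B : Sig), Mor A B → HSen Sig Mor Sen Nom Λ D A → HSen Sig Mor Sen Nom Λ D B
  | A, B, φ, .base _ ρ => .base B (senTr A B φ ρ)
  | _, B, _, .nom _ i => .nom B i
  | A, B, φ, .and _ ρ σ => .and B (hTr senTr po A B φ ρ) (hTr senTr po A B φ σ)
  | A, B, φ, .or _ ρ σ => .or B (hTr senTr po A B φ ρ) (hTr senTr po A B φ σ)
  | A, B, φ, .imp _ ρ σ => .imp B (hTr senTr po A B φ ρ) (hTr senTr po A B φ σ)
  | A, B, φ, .not _ ρ => .not B (hTr senTr po A B φ ρ)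
  | A, B, φ, .box _ n l args => .box B n l (fun i => hTr senTr po A B φ (args i))
  | A, B, φ, .dia _ n l args => .dia B n l (fun i => hTr senTr po A B φ (args i))
  | A, B, φ, .at_ _ i ρ => .at_ B i (hTr senTr po A B φ ρ)
  | A, B, φ, .all _ C χ hχ ρ =>
      .all B (po A B C φ χ hχ).P (po A B C φ χ hχ).qχ (po A B C φ χ hχ).hq
        (hTr senTr po C (po A B C φ χ hχ).P (po A B C φ χ hχ).qφ ρ)
  | A, B, φ, .ex _ C χ hχ ρ =>
      .ex B (po A B C φ χ hχ).P (po A B C φ χ hχ).qχ (po A B C φ χ hχ).hq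
        (hTr senTr po C (po A B C φ χ hχ).P (po A B C φ χ hχ).qφ ρ)

/-! Induction on the sentence; only the quantifier cases need an argument. Given the pushout square
of `χ` along `φ`, the `χ`-expansions of the `φ`-reduct of `K'` are exactly the `qφ`-reducts of the
`qχ`-expansions of `K'`: reducts of expansions are expansions because the square commutes, and
conversely an expansion is amalgamated with `K'` world by world, the frame and the nominals being
shared by all reducts. -/

attribute [ext] Kripke

section Reduct

variable {W Nom : Type u} {Λ : ℕ → Type u} (modRed : ∀ A B : Sig, Mor A B → Mod B → Mod A)
variable {A B C P : Sig} {φ : Mor A B} {χ : Mor A C} {qχ : Mor B P} {qφ : Mor C P}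

theorem kred_comm
    (hcomm : ∀ N, modRed A C χ (modRed C P qφ N) = modRed A B φ (modRed B P qχ N))
    (N : Kripke Sig Mod W Nom Λ P) :
    kred Sig Mor Mod modRed A C χ (kred Sig Mor Mod modRed C P qφ N) =
      kred Sig Mor Mod modRed A B φ (kred Sig Mor Mod modRed B P qχ N) :=
  Kripke.ext rfl rfl (funext fun v => hcomm (N.mod v))

theorem exists_kred_amalgam
    (hamalg : ∀ M' M₁, modRed A B φ M' = modRed A C χ M₁ →
      ∃ N, modRed B P qχ N = M' ∧ modRed C P qφ N = M₁)
    (K' : Kripke Sig Mod W Nom Λ B) (K₁ : Kripke Sig Mod W Nom Λ C)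
    (h : kred Sig Mor Mod modRed A B φ K' = kred Sig Mor Mod modRed A C χ K₁) :
    ∃ N : Kripke Sig Mod W Nom Λ P,
      kred Sig Mor Mod modRed B P qχ N = K' ∧ kred Sig Mor Mod modRed C P qφ N = K₁ := by
  have hrel : K'.rel = K₁.rel := congrArg Kripke.rel h
  have hnom : K'.nomI = K₁.nomI := congrArg Kripke.nomI h
  choose N hN' hN₁ using fun v => hamalg (K'.mod v) (K₁.mod v) (congrFun (congrArg Kripke.mod h) v)
  exact ⟨⟨K'.rel, K'.nomI, N⟩, Kripke.ext rfl rfl (funext hN'),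
    Kripke.ext hrel hnom (funext hN₁)⟩

theorem kred_eq_kred_iff_exists
    (hcomm : ∀ N, modRed A C χ (modRed C P qφ N) = modRed A B φ (modRed B P qχ N))
    (hamalg : ∀ M' M₁, modRed A B φ M' = modRed A C χ M₁ →
      ∃ N, modRed B P qχ N = M' ∧ modRed C P qφ N = M₁)
    (K' : Kripke Sig Mod W Nom Λ B) (K₁ : Kripke Sig Mod W Nom Λ C) :
    kred Sig Mor Mod modRed A C χ K₁ = kred Sig Mor Mod modRed A B φ K' ↔
      ∃ N : Kripke Sig Mod W Nom Λ P,
        kred Sig Mor Mod modRed B P qχ N = K' ∧ kred Sig Mor Mod modRed C P qφ N = K₁ := by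
  constructor
  · exact fun h => exists_kred_amalgam Sig Mor Mod modRed hamalg K' K₁ h.symm
  · rintro ⟨N, rfl, rfl⟩
    exact kred_comm Sig Mor Mod modRed hcomm N

end Reduct

/-- given the base satisfaction condition, commutation of model
reducts over the designated pushout squares, and weak amalgamation of these
squares (closure of the quantification space under the relevant pushouts),
local satisfaction in HI is preserved by translation along any signature
morphism φ that is the identity on nominals and modalities:
(M',W) ⊨^w Sen^HI(φ)(ρ) iff the φ-reduct Kripke model (same frame, world-wise
reduced components) satisfies ρ at w. -/
theorem hybrid_translation_satisfaction
    {W Nom : Type u} {Λ : ℕ → Type u} {D : ∀ A B : Sig, Mor A B → Prop}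
    (sat : ∀ A : Sig, Mod A → Sen A → Prop)
    (senTr : ∀ A B : Sig, Mor A B → Sen A → Sen B)
    (modRed : ∀ A B : Sig, Mor A B → Mod B → Mod A)
    (po : ∀ (A B C : Sig) (φ : Mor A B) (χ : Mor A C), D A C χ →
        POut Sig Mor D A B C φ χ)
    -- the satisfaction condition of the base institution
    (satCond : ∀ (A B : Sig) (φ : Mor A B) (M : Mod B) (ρ : Sen A),
        sat B M (senTr A B φ ρ) ↔ sat A (modRed A B φ M) ρ)
    -- the designated pushout squares commute for model reducts
    (hfunct : ∀ (A B C : Sig) (φ : Mor A B) (χ : Mor A C) (hχ : D A C χ)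
        (N : Mod (po A B C φ χ hχ).P),
        modRed A C χ (modRed C _ (po A B C φ χ hχ).qφ N) =
          modRed A B φ (modRed B _ (po A B C φ χ hχ).qχ N))
    -- weak amalgamation for the designated pushout squares
    (hamalg : ∀ (A B C : Sig) (φ : Mor A B) (χ : Mor A C) (hχ : D A C χ)
        (M' : Mod B) (M₁ : Mod C), modRed A B φ M' = modRed A C χ M₁ →
        ∃ N : Mod (po A B C φ χ hχ).P,
          modRed B _ (po A B C φ χ hχ).qχ N = M' ∧
            modRed C _ (po A B C φ χ hχ).qφ N = M₁) :
    ∀ (A B : Sig) (φ : Mor A B) (K' : Kripke Sig Mod W Nom Λ B) (w : W)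
      (ρ : HSen Sig Mor Sen Nom Λ D A),
      locSat Sig Mor Sen Mod sat modRed B K' w (hTr Sig Mor Sen senTr po A B φ ρ) ↔
        locSat Sig Mor Sen Mod sat modRed A
          (kred Sig Mor Mod modRed A B φ K') w ρ := by
  intro A B φ K' w ρ
  induction ρ generalizing B K' w with
  | base => simp only [locSat, hTr, kred, satCond]
  | nom => simp only [locSat, hTr, kred]
  | and _ _ _ ihρ ihσ => simp only [locSat, hTr, ihρ, ihσ]
  | or _ _ _ ihρ ihσ => simp only [locSat, hTr, ihρ, ihσ]
  | imp _ _ _ ihρ ihσ => simp only [locSat, hTr, ihρ, ihσ]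
  | not _ _ ihρ => simp only [locSat, hTr, ihρ]
  | box _ _ _ _ ih => simp only [locSat, hTr, kred, ih]
  | dia _ _ _ _ ih => simp only [locSat, hTr, kred, ih]
  | at_ _ _ _ ihρ => simp only [locSat, hTr, kred, ihρ]
  | all A C χ hχ ρ ih | ex A C χ hχ ρ ih =>
    simp [locSat, hTr, ih, kred_eq_kred_iff_exists Sig Mor Mod modRed
      (hfunct A B C φ χ hχ) (hamalg A B C φ χ hχ)]
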